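/- Let k ≥ 1 and β > β⁻ ≥ 1 be integers, let 𝒫 = 𝒬 = {0,…,β}^k, and let E_LP be the set of triples (p,q,j) ∈ 𝒫 × 𝒬 × [k] with ∑_{i=1}^{j}(p_i + q_i) ≤ β. Let H be a bipartite (β,k)-HEDCS with vertex parts P and Q, with P nonempty, having at least β⁻·|P|/2 edges. Then there exist nonnegative reals x(p,q,j) for (p,q,j) ∈ E_LP, n_P(p) for p ∈ 𝒫, and n_Q(q) for q ∈ 𝒬 such that: (1) n_P(p)·p_j = ∑_{q : (p,q,j) ∈ E_LP} x(p,q,j) for all p ∈ 𝒫 and j ∈ [k]; (2) n_Q(q)·q_j = ∑_{p : (p,q,j) ∈ E_LP} x(p,q,j) for all q ∈ 𝒬 and j ∈ [k]; (3) ∑_{p ∈ 𝒫} n_P(p) = 1; (4) ∑_{(p,q,j) ∈ E_LP} x(p,q,j) ≥ β⁻/2; and (5) ∑_{q ∈ 𝒬} n_Q(q) = |Q|/|P|. In particular, |Q|/|P| is the objective value of a feasible solution of the factor-revealing linear program LP(k,β,β⁻), so f(k,β,β⁻) ≥ LP(k,β,β⁻). -/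

import Mathlib

open Finset

variable {V : Type*} [DecidableEq V]

/-- Degree of a vertex in an edge set. -/
def deg (E : Finset (Sym2 V)) (v : V) : ℕ := (E.filter (fun e => v ∈ e)).card

/-- Edge-degree: the sum of the degrees of the two endpoints. -/
def edeg (E : Finset (Sym2 V)) (e : Sym2 V) : ℕ :=
  Sym2.lift ⟨fun u v => deg E u + deg E v, fun _ _ => add_comm _ _⟩ e

/-- Generalized `(β,β⁻,k)`-HEDCS of `G`: a hierarchical decomposition
`∅ = H_0 ⊆ H_1 ⊆ … ⊆ H_k = Hs` with edge-degrees in `H_i` of new edges at most `β`,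
and every edge of `G` outside `Hs` has edge-degree at least `β⁻` in `Hs`. -/
def IsHEDCSgen (G Hs : Finset (Sym2 V)) (β βm k : ℕ) : Prop :=
  Hs ⊆ G ∧ ∃ H : ℕ → Finset (Sym2 V),
    H 0 = ∅ ∧ H k = Hs ∧
    (∀ i < k, H i ⊆ H (i + 1)) ∧
    (∀ i, 1 ≤ i → i ≤ k → ∀ e ∈ H i \ H (i - 1), edeg (H i) e ≤ β) ∧
    (∀ e ∈ G \ Hs, βm ≤ edeg Hs e)

/-- `(β,k)`-HEDCS of `G`. -/
def IsHEDCS (G Hs : Finset (Sym2 V)) (β k : ℕ) : Prop :=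
  IsHEDCSgen G Hs β (β - 1) k

/-- Bipartite `(β,k)`-HEDCS with vertex parts `P` and `Q`
(the base graph is `Hs` itself, so the second HEDCS condition is vacuous). -/
def IsBipartiteHEDCS (P Q : Finset V) (Hs : Finset (Sym2 V)) (β k : ℕ) : Prop :=
  Disjoint P Q ∧
  (∀ e ∈ Hs, ∃ u v, e = s(u, v) ∧ u ∈ P ∧ v ∈ Q) ∧
  ∃ H : ℕ → Finset (Sym2 V),
    H 0 = ∅ ∧ H k = Hs ∧
    (∀ i < k, H i ⊆ H (i + 1)) ∧
    (∀ i, 1 ≤ i → i ≤ k → ∀ e ∈ H i \ H (i - 1), edeg (H i) e ≤ β)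

/-- A matching: a set of pairwise vertex-disjoint (non-loop) edges. -/
def IsMatching (M : Finset (Sym2 V)) : Prop :=
  (∀ e ∈ M, ¬ e.IsDiag) ∧
  ∀ e ∈ M, ∀ f ∈ M, e ≠ f → ∀ v : V, v ∈ e → v ∉ f

/-- The maximum matching size of the edge set `E`. -/
noncomputable def matchNum (E : Finset (Sym2 V)) : ℕ :=
  sSup {n : ℕ | ∃ M : Finset (Sym2 V), M ⊆ E ∧ IsMatching M ∧ M.card = n}

/-! Give every vertex its degree profile: entry `j` (0-based) counts the edges at it added in
round `j + 1` of the hierarchy. Take `n_P(p)`, `n_Q(q)` to be the numbers of vertices of `P`,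
`Q` with profile `p`, `q`, and `x(p,q,j)` the number of edges of round `j + 1` joining profiles
`p` and `q`, all divided by `|P|`. Counting the edges of round `j + 1` at the vertices of one
profile gives (1) and (2), and counting all edges gives (4). In `H_{j+1}` the degree of a vertex
is the partial sum of its profile up to `j`, so the edge-degree bound on a new edge of round
`j + 1` says exactly that `x` is supported on `E_LP`. -/

lemma Finset.sum_range_card_sdiff {α : Type*} [DecidableEq α] {H : ℕ → Finset α} {n : ℕ}
    (h0 : H 0 = ∅) (hmono : ∀ i < n, H i ⊆ H (i + 1)) :
    ∑ i ∈ range n, #(H (i + 1) \ H i) = #(H n) := by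
  induction n with
  | zero => simp [h0]
  | succ n ih =>
    rw [sum_range_succ, ih fun i hi => hmono i (by omega),
      add_comm, card_sdiff_add_card_eq_card (hmono n n.lt_succ_self)]

lemma Finset.subset_of_forall_subset_succ {α : Type*} {H : ℕ → Finset α} {n : ℕ}
    (hmono : ∀ i < n, H i ⊆ H (i + 1)) {i : ℕ} (hi : i ≤ n) : H i ⊆ H n := by
  induction n, hi using Nat.le_induction with
  | base => exact Subset.rfl
  | succ n hin ih => exact (ih fun m hm => hmono m (by omega)).trans (hmono n (by omega))

lemma Fin.sum_filter_le_eq_sum_range {M : Type*} [AddCommMonoid M] {k : ℕ} (f : ℕ → M)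
    (j : Fin k) : ∑ i ∈ univ.filter (· ≤ j), f i = ∑ i ∈ range (j + 1), f i := by
  rw [filter_ge_eq_Iic, Nat.range_succ_eq_Iic, ← Fin.map_valEmbedding_Iic, sum_map]
  rfl

lemma deg_mono {A B : Finset (Sym2 V)} (h : A ⊆ B) (v : V) : deg A v ≤ deg B v :=
  card_le_card (filter_subset_filter _ h)

lemma edeg_mk (E : Finset (Sym2 V)) (u v : V) : edeg E s(u, v) = deg E u + deg E v := rfl

lemma deg_le_edeg {E : Finset (Sym2 V)} {e : Sym2 V} {v : V} (hv : v ∈ e) :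
    deg E v ≤ edeg E e := by
  induction e using Sym2.ind with
  | _ a b => rcases Sym2.mem_iff.mp hv with rfl | rfl <;> simp [edeg_mk]

lemma deg_sdiff_le_of_edeg_le {A B : Finset (Sym2 V)} {β : ℕ}
    (h : ∀ e ∈ A \ B, edeg A e ≤ β) (v : V) : deg (A \ B) v ≤ β := by
  rcases ((A \ B).filter (v ∈ ·)).eq_empty_or_nonempty with h0 | ⟨e, he⟩
  · simp [deg, h0]
  · rw [mem_filter] at he
    calc deg (A \ B) v ≤ deg A v := deg_mono sdiff_subset v
      _ ≤ edeg A e := deg_le_edeg he.2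
      _ ≤ β := h e he.1

lemma sum_range_deg_sdiff {H : ℕ → Finset (Sym2 V)} {n : ℕ} (h0 : H 0 = ∅)
    (hmono : ∀ i < n, H i ⊆ H (i + 1)) (v : V) :
    ∑ i ∈ range n, deg (H (i + 1) \ H i) v = deg (H n) v := by
  have hfilter : ∀ A B : Finset (Sym2 V),
      (A \ B).filter (v ∈ ·) = A.filter (v ∈ ·) \ B.filter (v ∈ ·) := by
    intro A B; ext; simp only [mem_filter, mem_sdiff]; tauto
  simp only [deg, hfilter]
  exact sum_range_card_sdiff (by simp [h0]) fun i hi => filter_subset_filter _ (hmono i hi)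

lemma Finset.sum_card_filter_and_eq {α ι : Type*} [Fintype ι] [DecidableEq ι] (S : Finset α)
    (r : α → Prop) [DecidablePred r] (g : α → ι) :
    ∑ i, #(S.filter fun x => r x ∧ g x = i) = #(S.filter r) := by
  rw [card_eq_sum_card_fiberwise (f := g) (t := univ) fun _ _ => mem_univ _]
  simp_rw [filter_filter]

def IsBipartiteBetween (P Q : Finset V) (E : Finset (Sym2 V)) : Prop :=
  Disjoint P Q ∧ ∀ e ∈ E, ∃ u v, e = s(u, v) ∧ u ∈ P ∧ v ∈ Q

def edgePairs (P Q : Finset V) (E : Finset (Sym2 V)) : Finset (V × V) :=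
  (P ×ˢ Q).filter fun x => s(x.1, x.2) ∈ E

namespace IsBipartiteBetween

lemma symm {α : Type*} {P Q : Finset α} {E : Finset (Sym2 α)} (h : IsBipartiteBetween P Q E) :
    IsBipartiteBetween Q P E :=
  ⟨h.1.symm, fun e he => by
    obtain ⟨u, v, rfl, hu, hv⟩ := h.2 e he
    exact ⟨v, u, Sym2.eq_swap, hv, hu⟩⟩

lemma mono {α : Type*} {P Q : Finset α} {E E' : Finset (Sym2 α)} (h : IsBipartiteBetween P Q E)
    (hE : E' ⊆ E) : IsBipartiteBetween P Q E' :=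
  ⟨h.1, fun e he => h.2 e (hE he)⟩

variable {P Q : Finset V} {E : Finset (Sym2 V)}

lemma deg_eq_card_filter_left (h : IsBipartiteBetween P Q E) {u : V} (hu : u ∈ P) :
    deg E u = #(Q.filter fun v => s(u, v) ∈ E) := by
  refine (card_bij (fun v _ => s(u, v)) ?_ ?_ ?_).symm
  · intro v hv
    exact mem_filter.mpr ⟨(mem_filter.mp hv).2, Sym2.mem_mk_left u v⟩
  · intro v₁ _ v₂ _ heq
    exact Sym2.congr_right.mp heq
  · intro e he
    rw [mem_filter] at he
    obtain ⟨a, b, rfl, ha, hb⟩ := h.2 e he.1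
    rcases Sym2.mem_iff.mp he.2 with rfl | rfl
    · exact ⟨b, mem_filter.mpr ⟨hb, he.1⟩, rfl⟩
    · exact absurd hb (disjoint_left.mp h.1 hu)

lemma deg_eq_card_filter_right (h : IsBipartiteBetween P Q E) {v : V} (hv : v ∈ Q) :
    deg E v = #(P.filter fun u => s(u, v) ∈ E) := by
  simpa only [Sym2.eq_swap] using h.symm.deg_eq_card_filter_left hv

lemma card_edgePairs (h : IsBipartiteBetween P Q E) : #(edgePairs P Q E) = #E := by
  refine card_bij (fun x _ => s(x.1, x.2)) (fun x hx => (mem_filter.mp hx).2) ?_ ?_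
  · rintro ⟨u₁, v₁⟩ h₁ ⟨u₂, v₂⟩ h₂ heq
    simp only [edgePairs, mem_filter, mem_product] at h₁ h₂
    rcases Sym2.eq_iff.mp heq with ⟨rfl, rfl⟩ | ⟨rfl, rfl⟩
    · rfl
    · exact absurd h₂.1.2 (disjoint_left.mp h.1 h₁.1.1)
  · intro e he
    obtain ⟨u, v, rfl, hu, hv⟩ := h.2 e he
    exact ⟨(u, v), mem_filter.mpr ⟨mem_product.mpr ⟨hu, hv⟩, he⟩, rfl⟩

lemma card_edgePairs_filter_fst {γ : Type*} (h : IsBipartiteBetween P Q E) (f : V → γ) (c : γ)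
    [DecidablePred (f · = c)] {m : ℕ} (hm : ∀ u ∈ P, f u = c → deg E u = m) :
    #((edgePairs P Q E).filter fun x => f x.1 = c) = #(P.filter (f · = c)) * m := by
  rw [edgePairs, filter_filter, card_filter, sum_product,
    ← sum_const_nat fun u hu => hm u (mem_filter.mp hu).1 (mem_filter.mp hu).2, sum_filter]
  refine sum_congr rfl fun u hu => ?_
  split_ifs with hfu
  · simp only [hfu, and_true, h.deg_eq_card_filter_left hu, card_filter]
  · simp [hfu]

lemma card_edgePairs_filter_snd {γ : Type*} (h : IsBipartiteBetween P Q E) (g : V → γ) (d : γ)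
    [DecidablePred (g · = d)] {m : ℕ} (hm : ∀ v ∈ Q, g v = d → deg E v = m) :
    #((edgePairs P Q E).filter fun x => g x.2 = d) = #(Q.filter (g · = d)) * m := by
  rw [edgePairs, filter_filter, card_filter, sum_product_right,
    ← sum_const_nat fun v hv => hm v (mem_filter.mp hv).1 (mem_filter.mp hv).2, sum_filter]
  refine sum_congr rfl fun v hv => ?_
  split_ifs with hgv
  · simp only [hgv, and_true, h.deg_eq_card_filter_right hv, card_filter]
  · simp [hgv]

end IsBipartiteBetween

section RoundProfile

variable {H : ℕ → Finset (Sym2 V)} {β k : ℕ}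

variable (H β k) in
def NewEdgesEdegLE : Prop := ∀ j < k, ∀ e ∈ H (j + 1) \ H j, edeg (H (j + 1)) e ≤ β

def roundProfile (hH : NewEdgesEdegLE H β k) (v : V) : Fin k → Fin (β + 1) :=
  fun j => ⟨deg (H (j + 1) \ H j) v,
    Nat.lt_succ_of_le (deg_sdiff_le_of_edeg_le (hH j j.isLt) v)⟩

lemma sum_roundProfile_eq_deg (hH : NewEdgesEdegLE H β k) (h0 : H 0 = ∅)
    (hmono : ∀ i < k, H i ⊆ H (i + 1)) (v : V) (j : Fin k) :
    ∑ i ∈ univ.filter (· ≤ j), (roundProfile hH v i : ℕ) = deg (H (j + 1)) v :=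
  (Fin.sum_filter_le_eq_sum_range (fun i => deg (H (i + 1) \ H i) v) j).trans
    (sum_range_deg_sdiff h0 (fun i hi => hmono i (by omega)) v)

lemma sum_roundProfile_add_le (hH : NewEdgesEdegLE H β k) (h0 : H 0 = ∅)
    (hmono : ∀ i < k, H i ⊆ H (i + 1)) {u v : V} {j : Fin k}
    (he : s(u, v) ∈ H (j + 1) \ H j) :
    ∑ i ∈ univ.filter (· ≤ j),
      ((roundProfile hH u i : ℕ) + (roundProfile hH v i : ℕ)) ≤ β := by
  rw [sum_add_distrib, sum_roundProfile_eq_deg hH h0 hmono, sum_roundProfile_eq_deg hH h0 hmono,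
    ← edeg_mk]
  exact hH j j.isLt _ he

end RoundProfile

section LayerCount

variable {H : ℕ → Finset (Sym2 V)} {β k : ℕ} (P Q : Finset V) (hH : NewEdgesEdegLE H β k)

def layerCount (p q : Fin k → Fin (β + 1)) (j : Fin k) : ℕ :=
  #((edgePairs P Q (H (j + 1) \ H j)).filter fun x =>
    roundProfile hH x.1 = p ∧ roundProfile hH x.2 = q)

variable {P Q}

lemma layerCount_eq_zero (h0 : H 0 = ∅) (hmono : ∀ i < k, H i ⊆ H (i + 1))
    {p q : Fin k → Fin (β + 1)} {j : Fin k}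
    (hpq : ¬ ∑ i ∈ univ.filter (· ≤ j), ((p i : ℕ) + (q i : ℕ)) ≤ β) :
    layerCount P Q hH p q j = 0 := by
  unfold layerCount
  rw [card_eq_zero, filter_eq_empty_iff]
  rintro ⟨u, v⟩ huv ⟨rfl, rfl⟩
  exact hpq (sum_roundProfile_add_le hH h0 hmono (mem_filter.mp huv).2)

lemma sum_layerCount_right (hPQ : ∀ j : Fin k, IsBipartiteBetween P Q (H (j + 1) \ H j))
    (p : Fin k → Fin (β + 1)) (j : Fin k) :
    ∑ q, layerCount P Q hH p q j = #(P.filter (roundProfile hH · = p)) * p j := by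
  simp only [layerCount]
  rw [sum_card_filter_and_eq]
  exact (hPQ j).card_edgePairs_filter_fst _ p fun u _ hu => by rw [← hu]; rfl

lemma sum_layerCount_left (hPQ : ∀ j : Fin k, IsBipartiteBetween P Q (H (j + 1) \ H j))
    (q : Fin k → Fin (β + 1)) (j : Fin k) :
    ∑ p, layerCount P Q hH p q j = #(Q.filter (roundProfile hH · = q)) * q j := by
  simp only [layerCount, and_comm (b := roundProfile hH _ = q)]
  rw [sum_card_filter_and_eq]
  exact (hPQ j).card_edgePairs_filter_snd _ q fun v _ hv => by rw [← hv]; rfl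

lemma sum_layerCount (h0 : H 0 = ∅) (hmono : ∀ i < k, H i ⊆ H (i + 1))
    (hPQ : ∀ j : Fin k, IsBipartiteBetween P Q (H (j + 1) \ H j)) :
    ∑ p, ∑ q, ∑ j, layerCount P Q hH p q j = #(H k) := by
  have hlayer (j : Fin k) : ∑ p, ∑ q, layerCount P Q hH p q j = #(H (j + 1) \ H j) := by
    simp only [layerCount, sum_card_filter_and_eq]
    rw [← card_eq_sum_card_fiberwise fun _ _ => mem_univ _, (hPQ j).card_edgePairs]
  conv_lhs => enter [2, p]; rw [sum_comm]
  rw [sum_comm, sum_congr rfl fun j _ => hlayer j,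
    Fin.sum_univ_eq_sum_range (fun i => #(H (i + 1) \ H i)), sum_range_card_sdiff h0 hmono]

end LayerCount

theorem hedcs_lp_feasible_general {V : Type*} [DecidableEq V]
    (β βm k : ℕ)
    (P Q : Finset V) (Hs : Finset (Sym2 V)) (hP : P.Nonempty)
    (hH : IsBipartiteHEDCS P Q Hs β k)
    (hcard : (βm : ℝ) * P.card / 2 ≤ (Hs.card : ℝ)) :
    ∃ (x : (Fin k → Fin (β + 1)) → (Fin k → Fin (β + 1)) → Fin k → ℝ)
      (nP nQ : (Fin k → Fin (β + 1)) → ℝ),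
      -- nonnegativity of all variables
      (∀ p q j, 0 ≤ x p q j) ∧ (∀ p, 0 ≤ nP p) ∧ (∀ q, 0 ≤ nQ q) ∧
      -- `x` is supported on `E_LP`
      (∀ p q j, ¬ (∑ i ∈ Finset.univ.filter (· ≤ j), ((p i : ℕ) + (q i : ℕ)) ≤ β) →
        x p q j = 0) ∧
      -- constraint (1)
      (∀ p j, nP p * ((p j : ℕ) : ℝ) =
        ∑ q ∈ Finset.univ.filter
            (fun q => ∑ i ∈ Finset.univ.filter (· ≤ j), ((p i : ℕ) + (q i : ℕ)) ≤ β),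
          x p q j) ∧
      -- constraint (2)
      (∀ q j, nQ q * ((q j : ℕ) : ℝ) =
        ∑ p ∈ Finset.univ.filter
            (fun p => ∑ i ∈ Finset.univ.filter (· ≤ j), ((p i : ℕ) + (q i : ℕ)) ≤ β),
          x p q j) ∧
      -- constraint (3)
      (∑ p, nP p = 1) ∧
      -- constraint (4)
      ((βm : ℝ) / 2 ≤
        ∑ p, ∑ q, ∑ j ∈ Finset.univ.filter
            (fun j => ∑ i ∈ Finset.univ.filter (· ≤ j), ((p i : ℕ) + (q i : ℕ)) ≤ β),
          x p q j) ∧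
      -- objective value (5)
      (∑ q, nQ q = (Q.card : ℝ) / (P.card : ℝ)) := by
  obtain ⟨hdisj, hbip, H, h0, hHk, hmono, hdeg⟩ := hH
  have hH : NewEdgesEdegLE H β k := fun j hj => hdeg (j + 1) (by omega) hj
  have hPQ (j : Fin k) : IsBipartiteBetween P Q (H (j + 1) \ H j) :=
    (show IsBipartiteBetween P Q Hs from ⟨hdisj, hbip⟩).mono
      (hHk ▸ sdiff_subset.trans (subset_of_forall_subset_succ hmono j.isLt))
  have hsupp (p q : Fin k → Fin (β + 1)) (j : Fin k)
      (hx : (layerCount P Q hH p q j : ℝ) / #P ≠ 0) :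
      ∑ i ∈ univ.filter (· ≤ j), ((p i : ℕ) + (q i : ℕ)) ≤ β :=
    Not.imp_symm (layerCount_eq_zero (P := P) (Q := Q) hH h0 hmono) fun h => hx (by simp [h])
  have hP' : (0 : ℝ) < #P := by exact_mod_cast hP.card_pos
  refine ⟨fun p q j => layerCount P Q hH p q j / #P,
    fun p => #(P.filter (roundProfile hH · = p)) / #P,
    fun q => #(Q.filter (roundProfile hH · = q)) / #P,
    fun _ _ _ => by positivity, fun _ => by positivity, fun _ => by positivity,
    fun p q j h => by simp [layerCount_eq_zero hH h0 hmono h],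
    fun p j => ?_, fun q j => ?_, ?_, ?_, ?_⟩
  · rw [sum_filter_of_ne fun q _ => hsupp p q j, ← sum_div, ← Nat.cast_sum,
      sum_layerCount_right hH hPQ]
    push_cast; ring
  · rw [sum_filter_of_ne fun p _ => hsupp p q j, ← sum_div, ← Nat.cast_sum,
      sum_layerCount_left hH hPQ]
    push_cast; ring
  · rw [← sum_div, ← Nat.cast_sum, ← card_eq_sum_card_fiberwise fun _ _ => mem_univ _,
      div_self hP'.ne']
  · simp only [sum_filter_of_ne fun j _ => hsupp _ _ j, ← sum_div, ← Nat.cast_sum,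
      sum_layerCount hH h0 hmono hPQ, hHk]
    rw [le_div_iff₀ hP']
    linarith
  · rw [← sum_div, ← Nat.cast_sum, ← card_eq_sum_card_fiberwise fun _ _ => mem_univ _]

/-- From a bipartite `(β,k)`-HEDCS with parts `P` (nonempty), `Q` and at
least `β⁻·|P|/2` edges, one obtains a feasible solution `(x, n_P, n_Q)` of the
factor-revealing LP `LP(k,β,β⁻)` whose objective value is `|Q|/|P|`.
Degree profiles are indexed by `Fin k → Fin (β+1)` (vectors in `{0,…,β}^k`), and
`(p,q,j) ∈ E_LP` means `∑_{i ≤ j} (p_i + q_i) ≤ β`. -/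
theorem hedcs_lp_feasible {V : Type*} [DecidableEq V]
    (β βm k : ℕ) (hk : 1 ≤ k) (hβ : βm < β) (hβm : 1 ≤ βm)
    (P Q : Finset V) (Hs : Finset (Sym2 V)) (hP : P.Nonempty)
    (hH : IsBipartiteHEDCS P Q Hs β k)
    (hcard : (βm : ℝ) * P.card / 2 ≤ (Hs.card : ℝ)) :
    ∃ (x : (Fin k → Fin (β + 1)) → (Fin k → Fin (β + 1)) → Fin k → ℝ)
      (nP nQ : (Fin k → Fin (β + 1)) → ℝ),
      -- nonnegativity of all variables
      (∀ p q j, 0 ≤ x p q j) ∧ (∀ p, 0 ≤ nP p) ∧ (∀ q, 0 ≤ nQ q) ∧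
      -- `x` is supported on `E_LP`
      (∀ p q j, ¬ (∑ i ∈ Finset.univ.filter (· ≤ j), ((p i : ℕ) + (q i : ℕ)) ≤ β) →
        x p q j = 0) ∧
      -- constraint (1)
      (∀ p j, nP p * ((p j : ℕ) : ℝ) =
        ∑ q ∈ Finset.univ.filter
            (fun q => ∑ i ∈ Finset.univ.filter (· ≤ j), ((p i : ℕ) + (q i : ℕ)) ≤ β),
          x p q j) ∧
      -- constraint (2)
      (∀ q j, nQ q * ((q j : ℕ) : ℝ) =
        ∑ p ∈ Finset.univ.filter
            (fun p => ∑ i ∈ Finset.univ.filter (· ≤ j), ((p i : ℕ) + (q i : ℕ)) ≤ β),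
          x p q j) ∧
      -- constraint (3)
      (∑ p, nP p = 1) ∧
      -- constraint (4)
      ((βm : ℝ) / 2 ≤
        ∑ p, ∑ q, ∑ j ∈ Finset.univ.filter
            (fun j => ∑ i ∈ Finset.univ.filter (· ≤ j), ((p i : ℕ) + (q i : ℕ)) ≤ β),
          x p q j) ∧
      -- objective value (5)
      (∑ q, nQ q = (Q.card : ℝ) / (P.card : ℝ)) :=
  hedcs_lp_feasible_general β βm k P Q Hs hP hH hcard
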